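/- arXiv:2203.01690 — 5 statements merged into one kernel-verified Lean document; each statement's English description precedes it below -/
import Mathlib

section
/- Gordan's Lemma: if σ^∨ ⊆ ℝⁿ is a rational polyhedral cone (the set of nonnegative real combinations of finitely many integer vectors), then the semigroup S = σ^∨ ∩ ℤⁿ is finitely generated as a monoid, i.e., there is a finite subset A ⊆ S with ℕ·A = S. -/
open scoped BigOperators

/-- The set of lattice points of the rational polyhedral cone generated by the finite set
`T ⊆ ℤⁿ` (viewed inside `ℝⁿ`). -/
def latticePointsOfCone (n : ℕ) (T : Finset (Fin n → ℤ)) : Set (Fin n → ℤ) :=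
  {m | ∃ lam : (Fin n → ℤ) → ℝ, (∀ u, 0 ≤ lam u) ∧
    (fun i => (m i : ℝ)) = ∑ u ∈ T, lam u • (fun i => (u i : ℝ))}

lemma mem_lpc_iff {n : ℕ} {T : Finset (Fin n → ℤ)} {m : Fin n → ℤ} :
    m ∈ latticePointsOfCone n T ↔
      ∃ lam : (Fin n → ℤ) → ℝ, (∀ u, 0 ≤ lam u) ∧
        ∀ i, (m i : ℝ) = ∑ u ∈ T, lam u * (u i : ℝ) := by
  unfold latticePointsOfCone
  constructor
  · rintro ⟨lam, h0, heq⟩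
    refine ⟨lam, h0, fun i => ?_⟩
    have := congrFun heq i
    simpa [Finset.sum_apply] using this
  · rintro ⟨lam, h0, heq⟩
    refine ⟨lam, h0, funext fun i => ?_⟩
    simpa [Finset.sum_apply] using heq i

/-- The lattice points form an additive submonoid. -/
def lpcSubmonoid (n : ℕ) (T : Finset (Fin n → ℤ)) : AddSubmonoid (Fin n → ℤ) where
  carrier := latticePointsOfCone n T
  zero_mem' := mem_lpc_iff.2 ⟨0, fun _ => le_refl 0, fun i => by simp⟩
  add_mem' := by
    intro a b ha hb
    obtain ⟨la, la0, lae⟩ := mem_lpc_iff.1 ha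
    obtain ⟨lb, lb0, lbe⟩ := mem_lpc_iff.1 hb
    apply mem_lpc_iff.2
    refine ⟨la + lb, fun u => add_nonneg (la0 u) (lb0 u), fun i => ?_⟩
    have : ((a + b) i : ℝ) = (a i : ℝ) + (b i : ℝ) := by push_cast [Pi.add_apply]; ring
    rw [this, lae i, lbe i, ← Finset.sum_add_distrib]
    exact Finset.sum_congr rfl fun u _ => by simp [Pi.add_apply]; ring

/-- Gordan's Lemma: if `σ^∨ ⊆ ℝⁿ` is a rational polyhedral cone (nonnegative real span of a
finite set `T` of integer vectors), then the semigroup `S = σ^∨ ∩ ℤⁿ` is finitely generated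
as a monoid: there is a finite `A ⊆ S` with `ℕ·A = S`. -/
theorem gordan (n : ℕ) (T : Finset (Fin n → ℤ)) :
    ∃ A : Finset (Fin n → ℤ),
      (↑A : Set (Fin n → ℤ)) ⊆ latticePointsOfCone n T ∧
      (AddSubmonoid.closure (↑A : Set (Fin n → ℤ)) : Set (Fin n → ℤ)) =
        latticePointsOfCone n T := by
  classical
  -- the fundamental parallelepiped lattice points
  set K : Set (Fin n → ℤ) := {m | ∃ lam : (Fin n → ℤ) → ℝ,
      (∀ u, 0 ≤ lam u) ∧ (∀ u, lam u ≤ 1) ∧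
      ∀ i, (m i : ℝ) = ∑ u ∈ T, lam u * (u i : ℝ)} with hKdef
  -- K is finite, bounded by B
  set B : Fin n → ℤ := fun i => ∑ u ∈ T, |u i| with hBdef
  have hKfin : K.Finite := by
    apply Set.Finite.subset (Finset.Icc (-B) B).finite_toSet
    rintro m ⟨lam, h0, h1, heq⟩
    have hbound : ∀ i, |m i| ≤ B i := by
      intro i
      have : |(m i : ℝ)| ≤ ((B i : ℤ) : ℝ) := by
        rw [heq i, hBdef]
        push_cast
        calc |∑ u ∈ T, lam u * (u i : ℝ)| ≤ ∑ u ∈ T, |lam u * (u i : ℝ)| :=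
              Finset.abs_sum_le_sum_abs _ _
          _ ≤ ∑ u ∈ T, |(u i : ℝ)| := by
              refine Finset.sum_le_sum fun u _ => ?_
              rw [abs_mul]
              have : |lam u| ≤ 1 := by rw [abs_of_nonneg (h0 u)]; exact h1 u
              nlinarith [abs_nonneg ((u i : ℝ)), abs_nonneg (lam u)]
      have : ((|m i| : ℤ) : ℝ) ≤ ((B i : ℤ) : ℝ) := by rwa [Int.cast_abs]
      exact_mod_cast this
    simp only [Finset.coe_Icc, Set.mem_Icc, Pi.le_def]
    constructor
    · intro i; have := hbound i; have := abs_le.1 (hbound i); simpa [Pi.neg_apply] using this.1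
    · intro i; exact (abs_le.1 (hbound i)).2
  refine ⟨hKfin.toFinset, ?_, ?_⟩
  · -- A ⊆ lattice points
    intro m hm
    simp only [Set.Finite.coe_toFinset] at hm
    obtain ⟨lam, h0, h1, heq⟩ := hm
    exact mem_lpc_iff.2 ⟨lam, h0, heq⟩
  · apply le_antisymm
    · -- closure ⊆ S
      have : AddSubmonoid.closure (↑hKfin.toFinset : Set (Fin n → ℤ)) ≤ lpcSubmonoid n T := by
        apply AddSubmonoid.closure_le.2
        intro m hm
        simp only [Set.Finite.coe_toFinset] at hm
        obtain ⟨lam, h0, h1, heq⟩ := hm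
        exact mem_lpc_iff.2 ⟨lam, h0, heq⟩
      exact this
    · -- S ⊆ closure
      intro m hm
      obtain ⟨lam, h0, heq⟩ := mem_lpc_iff.1 hm
      set ν : (Fin n → ℤ) → ℕ := fun u => ⌊lam u⌋₊ with hν
      set r : Fin n → ℤ := fun i => m i - ∑ u ∈ T, (ν u : ℤ) * u i with hr
      have hT_mem : ∀ u ∈ T, u ∈ K := by
        intro u hu
        refine ⟨fun v => if v = u then 1 else 0, fun v => by positivity,
          fun v => by by_cases h : v = u <;> simp [h], fun i => ?_⟩
        simp only [ite_mul, one_mul, zero_mul, Finset.sum_ite_eq', if_pos hu]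
      have hr_mem : r ∈ K := by
        refine ⟨fun u => lam u - (ν u : ℝ), ?_, ?_, ?_⟩
        · intro u
          simp only [hν, sub_nonneg]
          exact Nat.floor_le (h0 u)
        · intro u
          have := Nat.lt_floor_add_one (lam u)
          simp only [hν]
          linarith
        · intro i
          have : (r i : ℝ) = (m i : ℝ) - ∑ u ∈ T, (ν u : ℝ) * (u i : ℝ) := by
            rw [hr]; push_cast; ring
          rw [this, heq i, ← Finset.sum_sub_distrib]
          exact Finset.sum_congr rfl fun u _ => by ring
      have hdecomp : m = (∑ u ∈ T, ν u • u) + r := by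
        funext i
        simp only [Pi.add_apply, Finset.sum_apply, Pi.smul_apply, hr, nsmul_eq_mul, Pi.mul_apply, Pi.natCast_apply]
        ring
      rw [SetLike.mem_coe, hdecomp]
      apply AddSubmonoid.add_mem
      · apply AddSubmonoid.sum_mem
        intro u hu
        have hu' : u ∈ (↑hKfin.toFinset : Set (Fin n → ℤ)) := by
          rw [hKfin.coe_toFinset]; exact hT_mem u hu
        have : u ∈ AddSubmonoid.closure (↑hKfin.toFinset : Set (Fin n → ℤ)) :=
          AddSubmonoid.subset_closure hu'
        exact nsmul_mem this _
      · have hr' : r ∈ (↑hKfin.toFinset : Set (Fin n → ℤ)) := by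
          rw [hKfin.coe_toFinset]; exact hr_mem
        exact AddSubmonoid.subset_closure hr'
end

section
/- A cone σ ⊆ ℝⁿ of the form Cone(S) for finite S is strongly convex (i.e., σ ∩ (−σ) = {0}) if and only if its dual cone σ^∨ ⊆ (ℝⁿ)* is full-dimensional (spans (ℝⁿ)* as a vector space). -/
open scoped BigOperators

/-- The polyhedral cone generated by a finite set `T ⊆ ℝⁿ`. -/
def coneOf (n : ℕ) (T : Finset (Fin n → ℝ)) : Set (Fin n → ℝ) :=
  {x | ∃ lam : (Fin n → ℝ) → ℝ, (∀ u, 0 ≤ lam u) ∧ x = ∑ u ∈ T, lam u • u}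

/-! If `σ ∩ −σ = {0}` then `σ \ {0}` is convex, so `0` lies outside the (compact) convex hull of
the nonzero generators, and Hahn–Banach separation yields `φ` strictly positive on them. Every
functional `ψ` is then `(ψ + tφ) − tφ` with both terms in `σ^∨` once `t` is large. Conversely, a
point of `σ ∩ −σ` is annihilated by `σ^∨`, hence by its span, hence by every functional. -/

open Filter

namespace PointedCone

section OrderedField

variable {𝕜 E : Type*} [Field 𝕜] [LinearOrder 𝕜] [IsStrictOrderedRing 𝕜]
  [AddCommGroup E] [Module 𝕜 E]

theorem eq_zero_of_add_eq_zero_of_salient {C : PointedCone 𝕜 E}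
    (hC : (C : ConvexCone 𝕜 E).Salient) {x y : E} (hx : x ∈ C) (hy : y ∈ C) (hxy : x + y = 0) :
    x = 0 := by
  by_contra hx0
  exact hC x hx hx0 (by rwa [← neg_eq_of_add_eq_zero_right hxy] at hy)

theorem convex_diff_zero_of_salient {C : PointedCone 𝕜 E} (hC : (C : ConvexCone 𝕜 E).Salient) :
    Convex 𝕜 ((C : Set E) \ {0}) := by
  rintro x ⟨hx, hx0⟩ y ⟨hy, hy0⟩ a b ha hb hab
  refine ⟨C.add_mem (C.smul_mem ha hx) (C.smul_mem hb hy), fun hsum => ?_⟩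
  have hax : a • x = 0 := eq_zero_of_add_eq_zero_of_salient hC (C.smul_mem ha hx)
    (C.smul_mem hb hy) hsum
  have hby : b • y = 0 := eq_zero_of_add_eq_zero_of_salient hC (C.smul_mem hb hy)
    (C.smul_mem ha hx) ((add_comm _ _).trans hsum)
  have ha0 : a = 0 := (smul_eq_zero.1 hax).resolve_right hx0
  have hb0 : b = 0 := (smul_eq_zero.1 hby).resolve_right hy0
  rw [ha0, hb0, add_zero] at hab
  exact zero_ne_one hab

theorem zero_notMem_convexHull_diff_zero {C : PointedCone 𝕜 E}
    (hC : (C : ConvexCone 𝕜 E).Salient) {s : Set E} (hs : s ⊆ C) :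
    (0 : E) ∉ convexHull 𝕜 (s \ {0}) := fun h =>
  (convexHull_min (Set.sdiff_subset_sdiff_left hs) (convex_diff_zero_of_salient hC) h).2 rfl

theorem salient_of_span_dual_eq_top {C : PointedCone 𝕜 E}
    (h : Submodule.span 𝕜 (dual (Module.Dual.eval 𝕜 E) C : Set (Module.Dual 𝕜 E)) = ⊤) :
    (C : ConvexCone 𝕜 E).Salient := by
  intro x hx hx0 hnx
  have hker : Submodule.span 𝕜 (dual (Module.Dual.eval 𝕜 E) C : Set (Module.Dual 𝕜 E)) ≤
      LinearMap.ker (Module.Dual.eval 𝕜 E x) :=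
    Submodule.span_le.2 fun φ hφ => le_antisymm (by simpa using hφ hnx) (hφ hx)
  rw [h] at hker
  exact hx0 ((Module.forall_dual_apply_eq_zero_iff 𝕜 x).1 fun φ => hker Submodule.mem_top)

theorem span_dual_eq_top_of_forall_pos {T : Finset E} {φ : Module.Dual 𝕜 E}
    (hφ : ∀ u ∈ T, u ≠ 0 → 0 < φ u) :
    Submodule.span 𝕜 (dual (Module.Dual.eval 𝕜 E) (hull 𝕜 (T : Set E)) : Set (Module.Dual 𝕜 E))
      = ⊤ := by
  refine Submodule.eq_top_iff'.2 fun ψ => ?_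
  obtain ⟨t, ht⟩ : ∃ t : 𝕜, ∀ u ∈ T, 0 ≤ ψ u + t * φ u := by
    refine ((eventually_all_finset T).2 fun u hu => ?_).exists (f := atTop)
    rcases eq_or_ne u 0 with rfl | hu0
    · simp
    · exact (tendsto_atTop_add_const_left _ _
        (tendsto_id.atTop_mul_const (hφ u hu hu0))).eventually_ge_atTop 0
  have hφ_mem : φ ∈ dual (Module.Dual.eval 𝕜 E) (hull 𝕜 (T : Set E)) := by
    rw [dual_hull]
    intro u hu
    rcases eq_or_ne u 0 with rfl | hu0
    · simp
    · exact (hφ u hu hu0).le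
  have hψ_mem : ψ + t • φ ∈ dual (Module.Dual.eval 𝕜 E) (hull 𝕜 (T : Set E)) := by
    rw [dual_hull]
    intro u hu
    simpa using ht u hu
  simpa using Submodule.sub_mem _ (Submodule.subset_span hψ_mem)
    (Submodule.smul_mem _ t (Submodule.subset_span hφ_mem))

end OrderedField

section LocallyConvex

variable {E : Type*} [AddCommGroup E] [Module ℝ E] [TopologicalSpace E] [IsTopologicalAddGroup E]
  [ContinuousSMul ℝ E] [LocallyConvexSpace ℝ E] [T2Space E]

theorem exists_dual_pos_of_salient {T : Finset E}
    (hT : (hull ℝ (T : Set E) : ConvexCone ℝ E).Salient) :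
    ∃ φ : Module.Dual ℝ E, ∀ u ∈ T, u ≠ 0 → 0 < φ u := by
  obtain ⟨f, c, hfc, hf⟩ := geometric_hahn_banach_point_closed (convex_convexHull ℝ _)
    (T.finite_toSet.sdiff.isCompact_convexHull (𝕜 := ℝ)).isClosed
    (zero_notMem_convexHull_diff_zero hT Submodule.subset_span)
  refine ⟨f.toLinearMap, fun u hu hu0 => ?_⟩
  have hcu : c < f u := hf u (subset_convexHull ℝ _ ⟨hu, hu0⟩)
  simp only [map_zero] at hfc
  exact hfc.trans hcu

theorem salient_hull_iff_span_dual_eq_top (T : Finset E) :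
    (hull ℝ (T : Set E) : ConvexCone ℝ E).Salient ↔
      Submodule.span ℝ (dual (Module.Dual.eval ℝ E) (hull ℝ (T : Set E)) : Set (Module.Dual ℝ E))
        = ⊤ :=
  ⟨fun hT => span_dual_eq_top_of_forall_pos (exists_dual_pos_of_salient hT).choose_spec,
    salient_of_span_dual_eq_top⟩

end LocallyConvex

end PointedCone

theorem coneOf_eq_hull (n : ℕ) (T : Finset (Fin n → ℝ)) :
    coneOf n T = PointedCone.hull ℝ (T : Set (Fin n → ℝ)) := by
  ext x
  constructor
  · rintro ⟨lam, hlam, rfl⟩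
    exact Submodule.sum_mem _ fun u hu =>
      PointedCone.smul_mem _ (hlam u) (Submodule.subset_span hu)
  · intro hx
    obtain ⟨f, -, rfl⟩ := Submodule.mem_span_finset.1 hx
    exact ⟨fun u => f u, fun u => (f u).2, rfl⟩

/-- A polyhedral cone `σ = Cone(T) ⊆ ℝⁿ` is strongly convex (`σ ∩ (−σ) = {0}`) if and only
if its dual cone `σ^∨ ⊆ (ℝⁿ)*` is full-dimensional, i.e. spans `(ℝⁿ)*`. -/
theorem strongly_convex_iff_dual_full_dimensional (n : ℕ) (T : Finset (Fin n → ℝ)) :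
    coneOf n T ∩ (-(coneOf n T)) = {0} ↔
      Submodule.span ℝ
        {φ : Module.Dual ℝ (Fin n → ℝ) | ∀ u ∈ coneOf n T, 0 ≤ φ u} = ⊤ := by
  rw [coneOf_eq_hull, ← PointedCone.salient_iff_inter_neg_eq_singleton]
  exact PointedCone.salient_hull_iff_span_dual_eq_top T
end

section
/- Let S ⊆ M be an affine semigroup (a finitely generated submonoid of a lattice M ≅ ℤⁿ) that is saturated: for all k ∈ ℕ with k > 0 and m ∈ M, k·m ∈ S implies m ∈ S. Then S equals σ^∨ ∩ M for some rational polyhedral cone σ^∨, namely the cone generated by any finite generating set of S. -/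
/-!
Let `m ∈ ℤⁿ` be a nonnegative real combination of `A`. By Carathéodory's reduction for cones
we may assume the generators involved are linearly independent over `ℝ`. Then `m` lies in their
real span, hence in their rational span, and linear independence forces the real coefficients to
equal these rational ones. Clearing denominators gives `k • m ∈ ℕ·A` for some `k > 0`, and
saturation gives `m ∈ ℕ·A`. The reverse inclusion is immediate.
-/

open Finset Submodule

theorem mem_span_of_algebraMap_comp_mem_span {K L κ : Type*} [Field K] [Field L] [Algebra K L]
    [Fintype κ] {S : Set (κ → K)} {x : κ → K}
    (hx : algebraMap K L ∘ x ∈ span L ((algebraMap K L ∘ ·) '' S)) : x ∈ span K S := by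
  classical
  by_contra hxS
  obtain ⟨f, hfx, hfS⟩ := exists_dual_map_eq_bot_of_notMem hxS inferInstance
  -- `f`, extended to `κ → L` through its values on the standard basis
  let g : (κ → L) →ₗ[L] L :=
    ∑ i, algebraMap K L (f fun j ↦ if i = j then 1 else 0) • LinearMap.proj i
  have hg (y : κ → K) : g (algebraMap K L ∘ y) = algebraMap K L (f y) := by
    simp [g, f.pi_apply_eq_sum_univ y, Algebra.smul_def, mul_comm]
  have hSg : span L ((algebraMap K L ∘ ·) '' S) ≤ LinearMap.ker g := by
    refine span_le.2 ?_
    rintro _ ⟨y, hy, rfl⟩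
    have hfy := mem_map_of_mem (f := f) (subset_span (R := K) hy)
    rw [hfS, mem_bot] at hfy
    simp [hg, hfy]
  exact hfx (by simpa [hg] using hSg hx)

section Caratheodory

variable {𝕜 E ι : Type*} [Field 𝕜] [LinearOrder 𝕜] [IsStrictOrderedRing 𝕜]
  [AddCommGroup E] [Module 𝕜 E] {v : ι → E} {s : Finset ι} {c : ι → 𝕜}

theorem exists_pos_of_not_linearIndepOn_finset (h : ¬LinearIndepOn 𝕜 v s) :
    ∃ g : ι → 𝕜, ∑ i ∈ s, g i • v i = 0 ∧ ∃ i ∈ s, 0 < g i := by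
  obtain ⟨g, hg, i, hi, hgi⟩ : ∃ g : ι → 𝕜, ∑ i ∈ s, g i • v i = 0 ∧ ∃ i ∈ s, g i ≠ 0 := by
    simpa [linearIndepOn_finset_iff] using h
  rcases hgi.lt_or_gt with hneg | hpos
  · exact ⟨-g, by simp [hg], i, hi, by simpa using hneg⟩
  · exact ⟨g, hg, i, hi, hpos⟩

theorem exists_nonneg_sum_erase_eq_of_not_linearIndepOn [DecidableEq ι]
    (h : ¬LinearIndepOn 𝕜 v s) (hc : ∀ i ∈ s, 0 ≤ c i) :
    ∃ j ∈ s, ∃ c' : ι → 𝕜, (∀ i ∈ s.erase j, 0 ≤ c' i) ∧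
      ∑ i ∈ s.erase j, c' i • v i = ∑ i ∈ s, c i • v i := by
  obtain ⟨g, hg, i₀, hi₀, hgi₀⟩ := exists_pos_of_not_linearIndepOn_finset h
  -- subtract the largest multiple `r • g` of the relation that keeps all coefficients `≥ 0`
  obtain ⟨j, hjT, hjmin⟩ := (s.filter (0 < g ·)).exists_min_image (fun i ↦ c i / g i)
    ⟨i₀, mem_filter.2 ⟨hi₀, hgi₀⟩⟩
  obtain ⟨hj, hgj⟩ := mem_filter.1 hjT
  set r := c j / g j
  have hr : 0 ≤ r := div_nonneg (hc j hj) hgj.le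
  refine ⟨j, hj, fun i ↦ c i - r * g i, fun i hi ↦ ?_, ?_⟩
  · have hi := mem_of_mem_erase hi
    rw [sub_nonneg]
    rcases le_or_gt (g i) 0 with hgi | hgi
    · exact (mul_nonpos_of_nonneg_of_nonpos hr hgi).trans (hc i hi)
    · exact (le_div_iff₀ hgi).1 (hjmin i (mem_filter.2 ⟨hi, hgi⟩))
  · rw [sum_erase _ (by simp [r, div_mul_cancel₀ _ hgj.ne'])]
    simp [sub_smul, sum_sub_distrib, mul_smul, ← smul_sum, hg]

theorem exists_linearIndepOn_nonneg_sum_eq [DecidableEq ι] (v : ι → E) (s : Finset ι)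
    (c : ι → 𝕜) (hc : ∀ i ∈ s, 0 ≤ c i) :
    ∃ t ⊆ s, LinearIndepOn 𝕜 v t ∧ ∃ d : ι → 𝕜, (∀ i ∈ t, 0 ≤ d i) ∧
      ∑ i ∈ t, d i • v i = ∑ i ∈ s, c i • v i := by
  induction s using Finset.strongInduction generalizing c with
  | H s ih =>
    by_cases hs : LinearIndepOn 𝕜 v s
    · exact ⟨s, subset_rfl, hs, c, hc, rfl⟩
    obtain ⟨j, hj, c', hc', hsum⟩ := exists_nonneg_sum_erase_eq_of_not_linearIndepOn hs hc
    obtain ⟨t, hts, ht, d, hd, hdsum⟩ := ih _ (erase_ssubset hj) c' hc'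
    exact ⟨t, hts.trans (erase_subset j s), ht, d, hd, hdsum.trans hsum⟩

end Caratheodory

theorem algebraMap_comp_sum_smul {K L κ ι : Type*} [Field K] [Field L] [Algebra K L]
    (s : Finset ι) (q : ι → K) (v : ι → κ → K) :
    algebraMap K L ∘ ∑ i ∈ s, q i • v i =
      ∑ i ∈ s, algebraMap K L (q i) • (algebraMap K L ∘ v i) := by
  ext j
  simp [Finset.sum_apply, Algebra.smul_def]

theorem exists_nonneg_rat_sum_eq_of_nonneg_real_sum_eq {ι κ : Type*} [DecidableEq ι]
    [Fintype κ] (v : ι → κ → ℚ) (s : Finset ι) (x : κ → ℚ) (c : ι → ℝ)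
    (hc : ∀ i ∈ s, 0 ≤ c i) (hx : ∑ i ∈ s, c i • (algebraMap ℚ ℝ ∘ v i) = algebraMap ℚ ℝ ∘ x) :
    ∃ q : ι → ℚ, (∀ i ∈ s, 0 ≤ q i) ∧ ∑ i ∈ s, q i • v i = x := by
  obtain ⟨t, hts, hli, d, hd, hdx⟩ :=
    exists_linearIndepOn_nonneg_sum_eq (fun i ↦ algebraMap ℚ ℝ ∘ v i) s c hc
  have hxt : x ∈ span ℚ (v '' t) := by
    refine mem_span_of_algebraMap_comp_mem_span (L := ℝ) ?_
    rw [Set.image_image, ← hx, ← hdx]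
    exact (mem_span_image_finset_iff_exists_fun' ℝ).2 ⟨d, rfl⟩
  obtain ⟨q, hqx⟩ := (mem_span_image_finset_iff_exists_fun' ℚ).1 hxt
  have hqd : ∀ i ∈ t, (q i : ℝ) - d i = 0 := by
    refine linearIndepOn_finset_iff.1 hli _ ?_
    simp [sub_smul, sum_sub_distrib, hdx, hx, ← hqx, algebraMap_comp_sum_smul]
  refine ⟨fun i ↦ if i ∈ t then q i else 0, fun i _ ↦ ?_, ?_⟩
  · dsimp only
    split_ifs with hi
    · exact_mod_cast (sub_eq_zero.1 (hqd i hi)).symm ▸ hd i hi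
    · exact le_rfl
  · rw [← sum_subset hts (fun i _ hi ↦ by simp [hi]), ← hqx]
    exact sum_congr rfl fun i hi ↦ by simp [hi]

theorem Rat.exists_pos_nat_mul_eq_natCast {ι : Type*} (s : Finset ι) (q : ι → ℚ)
    (hq : ∀ i ∈ s, 0 ≤ q i) : ∃ k : ℕ, 0 < k ∧ ∃ c : ι → ℕ, ∀ i ∈ s, (k : ℚ) * q i = c i := by
  set k := ∏ i ∈ s, (q i).den
  refine ⟨k, prod_pos fun i _ ↦ (q i).pos, fun i ↦ k / (q i).den * (q i).num.toNat, fun i hi ↦ ?_⟩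
  have hk : (k : ℚ) = (k / (q i).den : ℕ) * (q i).den := by
    exact_mod_cast (Nat.div_mul_cancel (dvd_prod_of_mem _ hi)).symm
  have hnum : (((q i).num.toNat : ℤ) : ℚ) = q i * (q i).den := by
    rw [Int.toNat_of_nonneg (Rat.num_nonneg.2 (hq i hi)), Rat.mul_den_eq_num]
  push_cast at hnum ⊢
  rw [hk, hnum]
  ring

theorem exists_pos_nsmul_mem_closure_of_nonneg_real_sum_eq {κ : Type*} [Fintype κ]
    (A : Finset (κ → ℤ)) (m : κ → ℤ) (lam : (κ → ℤ) → ℝ) (hlam : ∀ u ∈ A, 0 ≤ lam u)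
    (hm : (fun i ↦ (m i : ℝ)) = ∑ u ∈ A, lam u • fun i ↦ (u i : ℝ)) :
    ∃ k : ℕ, 0 < k ∧ k • m ∈ AddSubmonoid.closure (A : Set (κ → ℤ)) := by
  obtain ⟨q, hq, hqm⟩ := exists_nonneg_rat_sum_eq_of_nonneg_real_sum_eq
    (fun u i ↦ (u i : ℚ)) A (fun i ↦ (m i : ℚ)) lam hlam
    (by ext i; simpa [Finset.sum_apply] using (congrFun hm i).symm)
  obtain ⟨k, hk, c, hc⟩ := Rat.exists_pos_nat_mul_eq_natCast A q hq
  have hkm : k • m = ∑ u ∈ A, c u • u := by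
    ext i
    have hqmi := congrFun hqm i
    simp only [Finset.sum_apply, Pi.smul_apply, smul_eq_mul] at hqmi ⊢
    have : (k : ℚ) * m i = ∑ u ∈ A, (c u : ℚ) * u i := by
      rw [← hqmi, mul_sum]
      exact sum_congr rfl fun u hu ↦ by rw [← hc u hu, mul_assoc]
    exact_mod_cast this
  exact ⟨k, hk, hkm ▸ sum_mem fun u hu ↦ nsmul_mem (AddSubmonoid.subset_closure hu) _⟩

/-- A saturated affine semigroup is the set of lattice points of a rational polyhedral cone:
if `S = ℕ·A ⊆ ℤⁿ` (the monoid generated by a finite set `A`) is saturated, i.e. `k·m ∈ S`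
with `k > 0` implies `m ∈ S`, then `S = Cone(A) ∩ ℤⁿ`, where `Cone(A)` is the set of
nonnegative real combinations of `A`. -/
theorem saturated_semigroup_eq_cone_points (n : ℕ) (A : Finset (Fin n → ℤ))
    (hsat : ∀ k : ℕ, 0 < k → ∀ m : Fin n → ℤ,
      k • m ∈ AddSubmonoid.closure (↑A : Set (Fin n → ℤ)) →
      m ∈ AddSubmonoid.closure (↑A : Set (Fin n → ℤ))) :
    (AddSubmonoid.closure (↑A : Set (Fin n → ℤ)) : Set (Fin n → ℤ)) =
      {m | ∃ lam : (Fin n → ℤ) → ℝ, (∀ u, 0 ≤ lam u) ∧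
        (fun i => (m i : ℝ)) = ∑ u ∈ A, lam u • (fun i => (u i : ℝ))} := by
  ext m
  constructor
  · intro hm
    obtain ⟨f, -, rfl⟩ := AddSubmonoid.mem_closure_finset.1 hm
    exact ⟨fun u ↦ f u, fun u ↦ Nat.cast_nonneg _, by ext i; simp [Finset.sum_apply]⟩
  · rintro ⟨lam, hlam, hm⟩
    obtain ⟨k, hk, hkm⟩ :=
      exists_pos_nsmul_mem_closure_of_nonneg_real_sum_eq A m lam (fun u _ ↦ hlam u) hm
    exact hsat k hk m hkm
end

section
/- Let σ be a strongly convex rational polyhedral cone of full dimension n in ℝⁿ, and S = σ^∨ ∩ ℤⁿ its associated semigroup. Then the set H of irreducible elements of S (nonzero m ∈ S such that m = m' + m'' with m', m'' ∈ S forces m' = 0 or m'' = 0) generates S as a monoid, and every generating set of S contains H. -/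
/-!
The functional `m ↦ (∑ u ∈ T, u) ⬝ᵥ m` is a height on `S`: it is additive, and positive on
`S \ {0}` because an integer vector orthogonal to every generator of a full-dimensional cone is
orthogonal to all of `ℝⁿ`. Induction on the height splits every reducible element of `S` into
irreducible ones. Conversely, writing an irreducible element as a sum of elements of a generating
set `G ⊆ S`, irreducibility forces all but one summand to vanish, so the element lies in `G`.
-/

namespace AddSubmonoid

variable {M : Type*} [AddCommMonoid M]

def irreducibles (P : AddSubmonoid M) : Set M :=
  {m | m ∈ P ∧ m ≠ 0 ∧ ∀ a ∈ P, ∀ b ∈ P, m = a + b → a = 0 ∨ b = 0}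

theorem mem_closure_irreducibles_of_pos {P : AddSubmonoid M} (f : M →+ ℤ)
    (hf : ∀ m ∈ P, m ≠ 0 → 0 < f m) {m : M} (hm : m ∈ P) :
    m ∈ closure P.irreducibles := by
  induction hk : (f m).toNat using Nat.strong_induction_on generalizing m with
  | _ k ih =>
    by_cases h0 : m = 0
    · exact h0 ▸ zero_mem _
    by_cases hirr : m ∈ P.irreducibles
    · exact subset_closure hirr
    obtain ⟨a, ha, b, hb, rfl, ha0, hb0⟩ :
        ∃ a ∈ P, ∃ b ∈ P, m = a + b ∧ a ≠ 0 ∧ b ≠ 0 := by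
      simpa [irreducibles, hm, h0] using hirr
    have hfa := hf a ha ha0
    have hfb := hf b hb hb0
    rw [map_add] at hk
    exact add_mem (ih _ (by omega) ha rfl) (ih _ (by omega) hb rfl)

theorem irreducibles_subset_of_le_closure {P : AddSubmonoid M} {G : Set M} (hGP : G ⊆ P)
    (hPG : P ≤ closure G) : P.irreducibles ⊆ G := by
  suffices ∀ x ∈ closure G, x ∈ P.irreducibles → x ∈ G from fun x hx => this x (hPG hx.1) hx
  have hcl : closure G ≤ P := closure_le.2 hGP
  intro x hx
  induction hx using closure_induction with
  | mem x hx => exact fun _ => hx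
  | zero => exact fun h => absurd rfl h.2.1
  | add a b ha hb iha ihb =>
    intro hab
    rcases hab.2.2 a (hcl ha) b (hcl hb) rfl with rfl | rfl
    · rw [zero_add] at hab ⊢
      exact ihb hab
    · rw [add_zero] at hab ⊢
      exact iha hab

end AddSubmonoid

section Cone

variable {ι : Type*} [Fintype ι]

def intCone (T : Finset (ι → ℤ)) : Set (ι → ℝ) :=
  {x | ∃ lam : (ι → ℤ) → ℝ, (∀ u, 0 ≤ lam u) ∧ x = ∑ u ∈ T, lam u • (fun i => (u i : ℝ))}

def dualSemigroup (T : Finset (ι → ℤ)) : AddSubmonoid (ι → ℤ) where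
  carrier := {m | ∀ u ∈ T, 0 ≤ u ⬝ᵥ m}
  add_mem' ha hb u hu := by
    rw [dotProduct_add]
    exact add_nonneg (ha u hu) (hb u hu)
  zero_mem' u _ := by rw [dotProduct_zero]

theorem eq_zero_of_forall_dotProduct_eq_zero_of_span_eq_top {C : Set (ι → ℝ)}
    (hC : Submodule.span ℝ C = ⊤) {w : ι → ℝ} (hw : ∀ x ∈ C, w ⬝ᵥ x = 0) : w = 0 := by
  have hspan : ∀ x ∈ Submodule.span ℝ C, w ⬝ᵥ x = 0 := fun x hx => by
    induction hx using Submodule.span_induction with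
    | mem x hx => exact hw x hx
    | zero => exact dotProduct_zero w
    | add x y _ _ hx hy => rw [dotProduct_add, hx, hy, add_zero]
    | smul c x _ hx => rw [dotProduct_smul, hx, smul_zero]
  exact dotProduct_self_eq_zero.1 (hspan w (hC ▸ Submodule.mem_top))

theorem eq_zero_of_forall_dotProduct_eq_zero {T : Finset (ι → ℤ)}
    (hT : Submodule.span ℝ (intCone T) = ⊤) {m : ι → ℤ} (hm : ∀ u ∈ T, u ⬝ᵥ m = 0) :
    m = 0 := by
  have hcast : (Int.cast ∘ m : ι → ℝ) = 0 := by
    refine eq_zero_of_forall_dotProduct_eq_zero_of_span_eq_top hT ?_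
    rintro _ ⟨lam, -, rfl⟩
    refine (dotProduct_sum _ _ _).trans (Finset.sum_eq_zero fun u hu => ?_)
    have hcast_dot : ((u ⬝ᵥ m : ℤ) : ℝ) = (Int.cast ∘ m) ⬝ᵥ fun i => (u i : ℝ) := by
      simp [dotProduct, mul_comm]
    rw [dotProduct_smul, ← hcast_dot, hm u hu, Int.cast_zero, smul_zero]
  ext i
  simpa using congrFun hcast i

theorem dotProduct_sum_pos_of_mem_dualSemigroup {T : Finset (ι → ℤ)}
    (hT : Submodule.span ℝ (intCone T) = ⊤) {m : ι → ℤ} (hm : m ∈ dualSemigroup T)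
    (hm0 : m ≠ 0) : 0 < (∑ u ∈ T, u) ⬝ᵥ m := by
  rw [sum_dotProduct]
  refine lt_of_le_of_ne (Finset.sum_nonneg hm) fun h => hm0 ?_
  exact eq_zero_of_forall_dotProduct_eq_zero hT ((Finset.sum_eq_zero_iff_of_nonneg hm).1 h.symm)

end Cone

theorem hilbert_basis_of_cone_general (n : ℕ) (T : Finset (Fin n → ℤ))
    (C : Set (Fin n → ℝ))
    (hC : C = {x | ∃ lam : (Fin n → ℤ) → ℝ, (∀ u, 0 ≤ lam u) ∧
      x = ∑ u ∈ T, lam u • (fun i => (u i : ℝ))})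
    (hfull : Submodule.span ℝ C = ⊤)
    (S : Set (Fin n → ℤ))
    (hS : S = {m | ∀ u ∈ T, 0 ≤ ∑ i, u i * m i})
    (H : Set (Fin n → ℤ))
    (hH : H = {m | m ∈ S ∧ m ≠ 0 ∧
      ∀ m' ∈ S, ∀ m'' ∈ S, m = m' + m'' → m' = 0 ∨ m'' = 0}) :
    (∀ m ∈ S, m ∈ AddSubmonoid.closure H) ∧
    (∀ G : Set (Fin n → ℤ), G ⊆ S → (∀ m ∈ S, m ∈ AddSubmonoid.closure G) → H ⊆ G) := by
  have hS' : S = dualSemigroup T := hS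
  subst hC hS' hH
  refine ⟨fun m hm => ?_, fun G hGS hG => ?_⟩
  · exact AddSubmonoid.mem_closure_irreducibles_of_pos
      (AddMonoidHom.mk' (fun m => (∑ u ∈ T, u) ⬝ᵥ m) (dotProduct_add _))
      (fun _ => dotProduct_sum_pos_of_mem_dualSemigroup hfull) hm
  · exact AddSubmonoid.irreducibles_subset_of_le_closure hGS hG

/-- Hilbert basis theorem for pointed full-dimensional rational cones: let `σ ⊆ ℝⁿ` be the
cone generated by a finite set `T ⊆ ℤⁿ`, strongly convex and of full dimension `n`, and let
`S = σ^∨ ∩ ℤⁿ` be the associated semigroup. Then the set `H` of irreducible elements of `S`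
generates `S` as a monoid, and every generating set of `S` contains `H`. -/
theorem hilbert_basis_of_cone (n : ℕ) (T : Finset (Fin n → ℤ))
    (C : Set (Fin n → ℝ))
    (hC : C = {x | ∃ lam : (Fin n → ℤ) → ℝ, (∀ u, 0 ≤ lam u) ∧
      x = ∑ u ∈ T, lam u • (fun i => (u i : ℝ))})
    (hsc : C ∩ (-C) = {0})
    (hfull : Submodule.span ℝ C = ⊤)
    (S : Set (Fin n → ℤ))
    (hS : S = {m | ∀ u ∈ T, 0 ≤ ∑ i, u i * m i})
    (H : Set (Fin n → ℤ))
    (hH : H = {m | m ∈ S ∧ m ≠ 0 ∧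
      ∀ m' ∈ S, ∀ m'' ∈ S, m = m' + m'' → m' = 0 ∨ m'' = 0}) :
    (∀ m ∈ S, m ∈ AddSubmonoid.closure H) ∧
    (∀ G : Set (Fin n → ℤ), G ⊆ S → (∀ m ∈ S, m ∈ AddSubmonoid.closure G) → H ⊆ G) :=
  hilbert_basis_of_cone_general n T C hC hfull S hS H hH
end

section
/- Let A = {m₁,...,mₛ} ⊂ ℤⁿ with ℤ'A = ℤⁿ, and let Â = {(m₁,1),...,(mₛ,1)} ⊂ ℤ^{n+1}. Then there exists m ∈ ℕ·Â such that m + (Cone(Â) ∩ ℤ^{n+1}) ⊆ ℕ·Â. In other words, the saturation of the semigroup ℕ·Â differs from ℕ·Â only in a region that can be translated into ℕ·Â. -/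
open scoped BigOperators

/-- Let `A = {m₁,…,mₛ} ⊂ ℤⁿ` with `ℤ'A = ℤⁿ`, and `Â = {(m₁,1),…,(mₛ,1)} ⊂ ℤⁿ × ℤ`. Then
there exists `w ∈ ℕ·Â` such that `w + (Cone(Â) ∩ ℤ^{n+1}) ⊆ ℕ·Â`: the saturation of `ℕ·Â`
can be translated into `ℕ·Â`. -/
theorem saturation_translation_trick (n s : ℕ) (m : Fin s → Fin n → ℤ)
    (hZA : ∀ x : Fin n → ℤ, ∃ a : Fin s → ℤ, (∑ j, a j) = 0 ∧ x = ∑ j, a j • m j) :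
    ∃ w : (Fin n → ℤ) × ℤ,
      w ∈ AddSubmonoid.closure (Set.range fun j => (m j, (1 : ℤ))) ∧
      ∀ p : (Fin n → ℤ) × ℤ,
        (∃ lam : Fin s → ℝ, (∀ j, 0 ≤ lam j) ∧
          ((fun i => (p.1 i : ℝ)), (p.2 : ℝ)) =
            ∑ j, lam j • ((fun i => (m j i : ℝ)), (1 : ℝ))) →
        w + p ∈ AddSubmonoid.closure (Set.range fun j => (m j, (1 : ℤ))) := by
  classical
  set g : Fin s → (Fin n → ℤ) × ℤ := fun j => (m j, (1 : ℤ)) with hg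
  set M := AddSubmonoid.closure (Set.range g) with hM
  have memM : ∀ c : Fin s → ℤ, (∀ j, 0 ≤ c j) → (∑ j, c j • g j) ∈ M := by
    intro c hc
    refine AddSubmonoid.sum_mem _ (fun j _ => ?_)
    rw [← Int.toNat_of_nonneg (hc j), natCast_zsmul]
    exact nsmul_mem (AddSubmonoid.subset_closure (Set.mem_range_self j)) _
  rcases Nat.eq_zero_or_pos s with hs | hs
  · subst hs
    refine ⟨0, zero_mem _, ?_⟩
    rintro p ⟨lam, -, hp⟩
    simp only [Finset.univ_eq_empty, Finset.sum_empty] at hp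
    have h1 : p.1 = 0 := by
      funext i
      have h := congrFun (congrArg Prod.fst hp) i
      simp only [Prod.fst_zero, Pi.zero_apply] at h
      exact_mod_cast h
    have h2 : p.2 = 0 := by
      have h := congrArg Prod.snd hp
      simp only [Prod.snd_zero] at h
      exact_mod_cast h
    have hp0 : p = 0 := Prod.ext h1 h2
    rw [hp0, add_zero]; exact zero_mem _
  have j0 : Fin s := ⟨0, hs⟩
  -- every lattice point is an integer combination of the generators
  have lem1 : ∀ r : (Fin n → ℤ) × ℤ, ∃ c : Fin s → ℤ, r = ∑ j, c j • g j := by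
    intro r
    obtain ⟨a, ha0, ha⟩ := hZA (r.1 - r.2 • m j0)
    refine ⟨fun j => a j + if j = j0 then r.2 else 0, ?_⟩
    have h1 : (∑ j, (a j + if j = j0 then r.2 else 0) • g j).1
        = ∑ j, (a j + if j = j0 then r.2 else 0) • m j := by
      rw [Prod.fst_sum]; simp [g]
    have h2 : (∑ j, (a j + if j = j0 then r.2 else 0) • g j).2
        = ∑ j, (a j + if j = j0 then r.2 else 0) := by
      rw [Prod.snd_sum]
      simp [g, smul_eq_mul]
    refine Prod.ext ?_ ?_
    · rw [h1]
      have : ∑ j, (a j + if j = j0 then r.2 else 0) • m j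
          = (∑ j, a j • m j) + ∑ j, (if j = j0 then r.2 • m j else 0) := by
        rw [← Finset.sum_add_distrib]
        refine Finset.sum_congr rfl fun j _ => ?_
        rw [add_smul, ite_smul, zero_smul]
      rw [this, Finset.sum_ite_eq' Finset.univ j0, if_pos (Finset.mem_univ j0), ← ha]
      abel
    · rw [h2, Finset.sum_add_distrib, ha0, Finset.sum_ite_eq' Finset.univ j0,
        if_pos (Finset.mem_univ j0), zero_add]
  choose c hc using lem1
  set B : Fin n → ℤ := fun i => ∑ j, |m j i| with hB
  set T : Finset ((Fin n → ℤ) × ℤ) :=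
    (Finset.Icc (fun i => -B i) B) ×ˢ (Finset.Icc (-(s : ℤ)) s) with hT
  set ν : ℕ := T.sup fun r => Finset.univ.sup fun j => (-(c r j)).toNat with hν
  have hwmem : (ν • ∑ j, g j) ∈ M :=
    nsmul_mem (AddSubmonoid.sum_mem _ fun j _ =>
      AddSubmonoid.subset_closure (Set.mem_range_self j)) ν
  refine ⟨ν • ∑ j, g j, hwmem, ?_⟩
  rintro p ⟨lam, hlam, hp⟩
  have hp1 : ∀ i, (p.1 i : ℝ) = ∑ j, lam j * m j i := by
    intro i
    have := congrFun (congrArg Prod.fst hp) i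
    simpa [Prod.fst_sum, Finset.sum_apply] using this
  have hp2 : (p.2 : ℝ) = ∑ j, lam j := by
    have := congrArg Prod.snd hp
    simpa [Prod.snd_sum] using this
  set kZ : Fin s → ℤ := fun j => ⌊lam j⌋ with hkZ
  have hk0 : ∀ j, 0 ≤ kZ j := fun j => Int.floor_nonneg.mpr (hlam j)
  set q : (Fin n → ℤ) × ℤ := ∑ j, kZ j • g j with hq
  have hqM : q ∈ M := memM kZ hk0
  set r : (Fin n → ℤ) × ℤ := p - q with hr
  have hq1 : ∀ i, q.1 i = ∑ j, kZ j * m j i := by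
    intro i
    rw [hq, Prod.fst_sum]
    simp [g, Finset.sum_apply]
  have hq2 : q.2 = ∑ j, kZ j := by
    rw [hq, Prod.snd_sum]; simp [g, smul_eq_mul]
  have hr1 : ∀ i, (r.1 i : ℝ) = ∑ j, Int.fract (lam j) * m j i := by
    intro i
    have : r.1 i = p.1 i - q.1 i := rfl
    rw [this]
    push_cast
    rw [hp1 i, hq1 i]
    push_cast
    rw [← Finset.sum_sub_distrib]
    refine Finset.sum_congr rfl fun j _ => ?_
    rw [Int.fract, ← sub_mul]
  have hr2 : (r.2 : ℝ) = ∑ j, Int.fract (lam j) := by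
    have : r.2 = p.2 - q.2 := rfl
    rw [this]
    push_cast
    rw [hp2, hq2]
    push_cast
    rw [← Finset.sum_sub_distrib]
    exact Finset.sum_congr rfl fun j _ => by rw [Int.fract]
  have hrT : r ∈ T := by
    rw [hT, Finset.mem_product]
    constructor
    · rw [Finset.mem_Icc]
      constructor <;> intro i
      all_goals {
        have habs : |r.1 i| ≤ B i := by
          have hreal : |(r.1 i : ℝ)| ≤ (B i : ℝ) := by
            rw [hr1 i]
            refine (Finset.abs_sum_le_sum_abs _ _).trans ?_
            rw [hB]
            push_cast
            refine Finset.sum_le_sum fun j _ => ?_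
            rw [abs_mul]
            have h1 : |Int.fract (lam j)| ≤ 1 := by
              rw [abs_of_nonneg (Int.fract_nonneg _)]
              exact (Int.fract_lt_one _).le
            calc |Int.fract (lam j)| * |(m j i : ℝ)| ≤ 1 * |(m j i : ℝ)| :=
                  mul_le_mul_of_nonneg_right h1 (abs_nonneg _)
              _ = |(m j i : ℝ)| := one_mul _
          exact_mod_cast (by rwa [← Int.cast_abs] at hreal : ((|r.1 i| : ℤ) : ℝ) ≤ (B i : ℝ))
        first
          | exact neg_le_of_abs_le habs
          | exact le_of_abs_le habs }
    · rw [Finset.mem_Icc]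
      have habs : |r.2| ≤ (s : ℤ) := by
        have hreal : |(r.2 : ℝ)| ≤ (s : ℝ) := by
          rw [hr2, abs_of_nonneg (Finset.sum_nonneg fun j _ => Int.fract_nonneg _)]
          calc ∑ j, Int.fract (lam j) ≤ ∑ _j : Fin s, (1 : ℝ) :=
                Finset.sum_le_sum fun j _ => (Int.fract_lt_one _).le
            _ = s := by simp
        exact_mod_cast (by rwa [← Int.cast_abs] at hreal : ((|r.2| : ℤ) : ℝ) ≤ (s : ℝ))
      exact ⟨neg_le_of_abs_le habs, le_of_abs_le habs⟩
  have hcoef : ∀ j, 0 ≤ (ν : ℤ) + c r j := by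
    intro j
    have h1a : (-(c r j)).toNat ≤ Finset.univ.sup fun j' => (-(c r j')).toNat :=
      Finset.le_sup (f := fun j' => (-(c r j')).toNat) (Finset.mem_univ j)
    have h1b : (Finset.univ.sup fun j' => (-(c r j')).toNat) ≤ ν :=
      Finset.le_sup (f := fun r' => Finset.univ.sup fun j' => (-(c r' j')).toNat) hrT
    have h1 : (-(c r j)).toNat ≤ ν := le_trans h1a h1b
    have h2 : -(c r j) ≤ ((-(c r j)).toNat : ℤ) := Int.self_le_toNat _
    omega
  have hwr : (ν • ∑ j, g j) + r = ∑ j, ((ν : ℤ) + c r j) • g j := by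
    conv_lhs => rw [Finset.smul_sum, hc r]
    rw [← Finset.sum_add_distrib]
    exact Finset.sum_congr rfl fun j _ => by rw [add_smul, natCast_zsmul]
  have key : (ν • ∑ j, g j) + p = ((ν • ∑ j, g j) + r) + q := by
    rw [hr]; abel
  rw [key, hwr]
  exact AddSubmonoid.add_mem _ (memM _ hcoef) hqM
end
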